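/- arXiv:2107.00988 — 4 statements merged into one kernel-verified Lean document; each statement's English description precedes it below -/
import Mathlib

section
/- For every integer g ≥ 1, the following identity holds in ℚ: the sum over all (m₁, m₂) ∈ M_g of w(m₁, m₂) equals the sum over integers i with 0 ≤ i < ⌈(g + 2 − 2k)/6⌉ of 1/((3i + k)! · (g + 2 − (3i + k))!), plus 1/(2 · ((g/2 + 1)!)²) if g is even (and plus 0 if g is odd). Here w(m₁, m₂) := 1/(2 · (m₁!)²) when m₁ = m₂ and w(m₁, m₂) := 1/(m₁! · m₂!) when m₁ ≠ m₂. (This is the combinatorial content of the closed formula for the number of connected components of the moduli space of trigonal superelliptic curves of genus g with level 3 structure: each (m₁, m₂) ∈ M_g contributes |Sp(2g, F₃)| · w(m₁, m₂) components.) -/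
/-- The index set `M_g`, realized as a finset: pairs `(m₁, m₂)` with `m₁ + m₂ = g + 2`,
`m₁ + 2·m₂ ≡ 0 (mod 3)` and `m₂ ≤ m₁`. -/
def trigIndexFinset (g : ℕ) : Finset (ℕ × ℕ) :=
  (Finset.HasAntidiagonal.antidiagonal (g + 2)).filter (fun p => (p.1 + 2 * p.2) % 3 = 0 ∧ p.2 ≤ p.1)

/-- The reciprocal `w(m₁, m₂)` of the order of the symmetry group `A_{(m₁,m₂)}` of affine
models of trigonal superelliptic curves with branch multiplicity data `(m₁, m₂)`. -/
def trigWeight (p : ℕ × ℕ) : ℚ :=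
  if p.1 = p.2 then 1 / (2 * (p.1.factorial : ℚ) ^ 2)
  else 1 / ((p.1.factorial : ℚ) * (p.2.factorial : ℚ))


/-!
Every pair in `M_g` is determined by `m₂`, and the congruence condition says exactly `m₂ ≡ k (mod 3)`.
So the off-diagonal pairs are `(g + 2 - (3i + k), 3i + k)` with `3i + k < (g + 2)/2`, i.e.
`i < ⌈(g + 2 - 2k)/6⌉`, each of weight `1/(m₁! m₂!)`; the only possible diagonal pair is
`(g/2 + 1, g/2 + 1)`, present exactly when `g` is even, of weight `1/(2 (m₁!)²)`.
-/

open Finset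

lemma trigWeight_of_ne {p : ℕ × ℕ} (h : p.1 ≠ p.2) :
    trigWeight p = 1 / ((p.1.factorial : ℚ) * (p.2.factorial : ℚ)) :=
  if_neg h

lemma mem_trigIndexFinset_iff {g k : ℕ} (hk : k ≤ 2) (hk3 : (g + 2 + k) % 3 = 0) {p : ℕ × ℕ} :
    p ∈ trigIndexFinset g ↔ p.1 + p.2 = g + 2 ∧ p.2 % 3 = k ∧ p.2 ≤ p.1 := by
  simp only [trigIndexFinset, mem_filter, HasAntidiagonal.mem_antidiagonal]
  omega

lemma trigIndexFinset_filter_eq (g : ℕ) :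
    (trigIndexFinset g).filter (fun p => p.1 = p.2) =
      if Even g then {(g / 2 + 1, g / 2 + 1)} else ∅ := by
  ext ⟨a, b⟩
  simp only [trigIndexFinset, mem_filter, HasAntidiagonal.mem_antidiagonal, Nat.even_iff]
  split_ifs
  · simp only [mem_singleton, Prod.mk.injEq]
    constructor
    · omega
    · rintro ⟨rfl, rfl⟩
      omega
  · simp only [notMem_empty, iff_false]
    omega

lemma trigIndexFinset_filter_ne {g k : ℕ} (hk : k ≤ 2) (hk3 : (g + 2 + k) % 3 = 0) :
    (trigIndexFinset g).filter (fun p => p.1 ≠ p.2) =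
      (range ((g + 2 - 2 * k + 5) / 6)).image (fun i => (g + 2 - (3 * i + k), 3 * i + k)) := by
  ext p
  simp only [mem_filter, mem_trigIndexFinset_iff hk hk3, mem_image, mem_range, Prod.ext_iff]
  constructor
  · rintro ⟨⟨hsum, hmod, hle⟩, hne⟩
    exact ⟨p.2 / 3, by omega, by omega, by omega⟩
  · rintro ⟨i, hi, h1, h2⟩
    omega

theorem stmt4_general (g k : ℕ) (hk : k ≤ 2) (hk3 : (g + 2 + k) % 3 = 0) :
    ∑ p ∈ trigIndexFinset g, trigWeight p =
      (∑ i ∈ Finset.range ((g + 2 - 2 * k + 5) / 6),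
        1 / (((3 * i + k).factorial : ℚ) * ((g + 2 - (3 * i + k)).factorial : ℚ))) +
      (if Even g then 1 / (2 * ((g / 2 + 1).factorial : ℚ) ^ 2) else 0) := by
  rw [← sum_filter_not_add_sum_filter _ (fun p => p.1 = p.2), trigIndexFinset_filter_ne hk hk3,
    trigIndexFinset_filter_eq]
  have hinj : Set.InjOn (fun i => (g + 2 - (3 * i + k), 3 * i + k))
      (range ((g + 2 - 2 * k + 5) / 6)) := fun i _ j _ hij => by
    simp only [Prod.ext_iff] at hij
    omega
  congr 1
  · rw [sum_image hinj]
    refine sum_congr rfl fun i hi => ?_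
    rw [mem_range] at hi
    rw [trigWeight_of_ne (by dsimp only; omega), mul_comm]
  · split_ifs
    · rw [sum_singleton, trigWeight, if_pos rfl]
    · rfl

theorem stmt4 (g k : ℕ) (hg : 1 ≤ g) (hk : k ≤ 2) (hk3 : (g + 2 + k) % 3 = 0) :
    ∑ p ∈ trigIndexFinset g, trigWeight p =
      (∑ i ∈ Finset.range ((g + 2 - 2 * k + 5) / 6),
        1 / (((3 * i + k).factorial : ℚ) * ((g + 2 - (3 * i + k)).factorial : ℚ))) +
      (if Even g then 1 / (2 * ((g / 2 + 1).factorial : ℚ) ^ 2) else 0) :=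
  stmt4_general g k hk hk3
end

section
/- Let p be a prime and let m : (ZMod p)ˣ → ℕ be a function which is not identically zero. With X := Σ_{j ∈ (ZMod p)ˣ} Fin (m(j)), let δ : Π_j Perm(Fin (m(j))) → Perm(X) be the blockwise embedding δ(σ)(j, k) := (j, σ_j(k)) and let γ : Stab_p(m) → Perm(X) be given by γ(ζ)(j, k) := (ζ·j, k), where Stab_p(m) := {ζ ∈ (ZMod p)ˣ : m(ζ·j) = m(j) for all j}. Then the subgroup A_m of Perm(X) generated by the images of δ and γ has cardinality (Π_j (m(j))!) · |Stab_p(m)|. -/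
def multStab (p : ℕ) (m : (ZMod p)ˣ → ℕ) : Subgroup (ZMod p)ˣ where
  carrier := {ζ | ∀ j, m (ζ * j) = m j}
  one_mem' := by intro j; rw [one_mul]
  mul_mem' := by
    intro a b ha hb j
    rw [mul_assoc, ha (b * j), hb j]
  inv_mem' := by
    intro a ha j
    have h := ha (a⁻¹ * j)
    rw [mul_inv_cancel_left] at h; exact h.symm

def gammaMap (p : ℕ) (m : (ZMod p)ˣ → ℕ) (ζ : multStab p m) :
    Equiv.Perm (Σ j : (ZMod p)ˣ, Fin (m j)) :=
  Equiv.sigmaCongr (Equiv.mulLeft (ζ : (ZMod p)ˣ)) (fun j => finCongr (ζ.2 j).symm)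

def deltaMap (p : ℕ) (m : (ZMod p)ˣ → ℕ)
    (σ : ∀ j : (ZMod p)ˣ, Equiv.Perm (Fin (m j))) :
    Equiv.Perm (Σ j : (ZMod p)ˣ, Fin (m j)) :=
  Equiv.sigmaCongrRight σ

def modelGroup (p : ℕ) (m : (ZMod p)ˣ → ℕ) :
    Subgroup (Equiv.Perm (Σ j : (ZMod p)ˣ, Fin (m j))) :=
  Subgroup.closure (Set.range (deltaMap p m) ∪ Set.range (gammaMap p m))

section Aux

variable {p : ℕ} {m : (ZMod p)ˣ → ℕ}

lemma sigma_mk_eq {j j' : (ZMod p)ˣ} (h : j' = j) (e : m j = m j') (k : Fin (m j)) :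
    (⟨j', finCongr e k⟩ : Σ i, Fin (m i)) = ⟨j, k⟩ := by subst h; simp

lemma gammaMap_apply (ζ : multStab p m) (j : (ZMod p)ˣ) (k : Fin (m j)) :
    gammaMap p m ζ ⟨j, k⟩ = ⟨(ζ : (ZMod p)ˣ) * j, finCongr (ζ.2 j).symm k⟩ := rfl

lemma deltaMap_apply (σ : ∀ j : (ZMod p)ˣ, Equiv.Perm (Fin (m j))) (j : (ZMod p)ˣ)
    (k : Fin (m j)) : deltaMap p m σ ⟨j, k⟩ = ⟨j, σ j k⟩ := rfl

/-- `γ` as a monoid hom. -/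
def gammaHom (p : ℕ) (m : (ZMod p)ˣ → ℕ) :
    multStab p m →* Equiv.Perm (Σ j : (ZMod p)ˣ, Fin (m j)) where
  toFun := gammaMap p m
  map_one' := by
    refine Equiv.ext fun ⟨j, k⟩ => ?_
    rw [Equiv.Perm.one_apply, gammaMap_apply]
    exact sigma_mk_eq (one_mul j) _ k
  map_mul' ζ ξ := by
    refine Equiv.ext fun ⟨j, k⟩ => ?_
    rw [Equiv.Perm.mul_apply, gammaMap_apply, gammaMap_apply, gammaMap_apply]
    refine Sigma.ext (by simp [mul_assoc]) ?_
    rw [Fin.heq_ext_iff (by simp [mul_assoc])]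
    simp

lemma deltaMap_mul (σ τ : ∀ j : (ZMod p)ˣ, Equiv.Perm (Fin (m j))) :
    deltaMap p m (σ * τ) = deltaMap p m σ * deltaMap p m τ :=
  (Equiv.Perm.sigmaCongrRightHom (fun j : (ZMod p)ˣ => Fin (m j))).map_mul σ τ

lemma gammaMap_mul (ζ ξ : multStab p m) :
    gammaMap p m (ζ * ξ) = gammaMap p m ζ * gammaMap p m ξ := (gammaHom p m).map_mul ζ ξ

lemma gammaMap_one : gammaMap p m 1 = 1 := (gammaHom p m).map_one

lemma gammaMap_inv (ζ : multStab p m) : (gammaMap p m ζ)⁻¹ = gammaMap p m ζ⁻¹ :=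
  (map_inv (gammaHom p m) ζ).symm

lemma deltaMap_inv (σ : ∀ j : (ZMod p)ˣ, Equiv.Perm (Fin (m j))) :
    (deltaMap p m σ)⁻¹ = deltaMap p m σ⁻¹ :=
  (map_inv (Equiv.Perm.sigmaCongrRightHom (fun j : (ZMod p)ˣ => Fin (m j))) σ).symm

lemma deltaMap_one : deltaMap p m 1 = 1 :=
  (Equiv.Perm.sigmaCongrRightHom (fun j : (ZMod p)ˣ => Fin (m j))).map_one

/-- transporting a blockwise permutation along an equality of indices -/
lemma tau_val {j j' : (ZMod p)ˣ} (h : j = j') (τ : ∀ i : (ZMod p)ˣ, Equiv.Perm (Fin (m i)))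
    (k : Fin (m j)) (k' : Fin (m j')) (hk : (k : ℕ) = (k' : ℕ)) :
    ((τ j' k' : Fin (m j')) : ℕ) = ((τ j k : Fin (m j)) : ℕ) := by
  subst h; cases Fin.ext hk; rfl

/-- the conjugate of `δ τ` by `γ ζ`. -/
def conjP (ζ : multStab p m) (τ : ∀ i : (ZMod p)ˣ, Equiv.Perm (Fin (m i)))
    (j : (ZMod p)ˣ) : Equiv.Perm (Fin (m j)) :=
  (finCongr (((multStab p m).inv_mem ζ.2) j : m ((ζ : (ZMod p)ˣ)⁻¹ * j) = m j)).permCongr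
    (τ ((ζ : (ZMod p)ˣ)⁻¹ * j))

lemma gamma_delta_comm (ζ : multStab p m) (τ : ∀ i : (ZMod p)ˣ, Equiv.Perm (Fin (m i))) :
    gammaMap p m ζ * deltaMap p m τ = deltaMap p m (conjP ζ τ) * gammaMap p m ζ := by
  refine Equiv.ext fun ⟨j, k⟩ => ?_
  rw [Equiv.Perm.mul_apply, Equiv.Perm.mul_apply, deltaMap_apply, gammaMap_apply,
    gammaMap_apply, deltaMap_apply]
  refine Sigma.ext rfl (heq_of_eq (Fin.ext ?_))
  simp only [conjP, Equiv.permCongr_apply, finCongr_apply, Fin.coe_cast]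
  exact (tau_val (inv_mul_cancel_left (ζ : (ZMod p)ˣ) j).symm τ k _ (by simp)).symm

end Aux

theorem stmt7 (p : ℕ) (hp : p.Prime) (m : (ZMod p)ˣ → ℕ) (hm : m ≠ 0) :
    haveI : Fact p.Prime := ⟨hp⟩
    Nat.card (modelGroup p m) =
      (∏ j : (ZMod p)ˣ, (m j).factorial) * Nat.card (multStab p m) := by
  haveI : Fact p.Prime := ⟨hp⟩
  -- the subgroup of products δσ * γζ
  set T : Subgroup (Equiv.Perm (Σ j : (ZMod p)ˣ, Fin (m j))) :=
    { carrier := {g | ∃ σ ζ, g = deltaMap p m σ * gammaMap p m ζ}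
      one_mem' := ⟨1, 1, by rw [deltaMap_one, gammaMap_one, one_mul]⟩
      mul_mem' := by
        rintro a b ⟨σ, ζ, rfl⟩ ⟨τ, ξ, rfl⟩
        refine ⟨σ * conjP ζ τ, ζ * ξ, ?_⟩
        rw [deltaMap_mul, gammaMap_mul, mul_assoc, ← mul_assoc (gammaMap p m ζ),
          gamma_delta_comm]
        group
      inv_mem' := by
        rintro a ⟨σ, ζ, rfl⟩
        refine ⟨conjP ζ⁻¹ σ⁻¹, ζ⁻¹, ?_⟩
        rw [mul_inv_rev, gammaMap_inv, deltaMap_inv]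
        exact gamma_delta_comm ζ⁻¹ σ⁻¹ } with hT
  have hTeq : modelGroup p m = T := by
    refine le_antisymm (Subgroup.closure_le _ |>.mpr ?_) ?_
    · rintro x (⟨σ, rfl⟩ | ⟨ζ, rfl⟩)
      · exact ⟨σ, 1, by rw [gammaMap_one, mul_one]⟩
      · exact ⟨1, ζ, by rw [deltaMap_one, one_mul]⟩
    · rintro x ⟨σ, ζ, rfl⟩
      exact mul_mem (Subgroup.subset_closure (Or.inl ⟨σ, rfl⟩))
        (Subgroup.subset_closure (Or.inr ⟨ζ, rfl⟩))
  rw [hTeq]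
  -- the bijection
  obtain ⟨j0, hj0⟩ : ∃ j, m j ≠ 0 := Function.ne_iff.mp hm
  set k0 : Fin (m j0) := ⟨0, Nat.pos_of_ne_zero hj0⟩ with hk0
  have hbij : Function.Bijective
      (fun x : (∀ j : (ZMod p)ˣ, Equiv.Perm (Fin (m j))) × multStab p m =>
        (⟨deltaMap p m x.1 * gammaMap p m x.2, ⟨x.1, x.2, rfl⟩⟩ : T)) := by
    constructor
    · rintro ⟨σ, ζ⟩ ⟨τ, ξ⟩ h
      have h' : deltaMap p m σ * gammaMap p m ζ = deltaMap p m τ * gammaMap p m ξ :=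
        congrArg Subtype.val h
      have hζξ : ζ = ξ := by
        have h1 := congrArg (fun g : Equiv.Perm (Σ j : (ZMod p)ˣ, Fin (m j)) =>
          (g ⟨j0, k0⟩).1) h'
        simp only [Equiv.Perm.mul_apply, gammaMap_apply, deltaMap_apply] at h1
        exact Subtype.ext (mul_right_cancel h1)
      subst hζξ
      have h2 : deltaMap p m σ = deltaMap p m τ := mul_right_cancel h'
      have hστ : σ = τ := Equiv.Perm.sigmaCongrRightHom_injective h2
      rw [hστ]
    · rintro ⟨g, σ, ζ, rfl⟩
      exact ⟨⟨σ, ζ⟩, rfl⟩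
  rw [← Nat.card_eq_of_bijective _ hbij, Nat.card_prod, Nat.card_pi]
  congr 1
  refine Finset.prod_congr rfl fun j _ => ?_
  rw [Nat.card_eq_fintype_card, Fintype.card_perm, Fintype.card_fin]
end

section
/- For every integer g ≥ 2, there exists an injective group homomorphism from the symmetric group S_{2g+2} (i.e., Perm(Fin (2g+2))) into the symplectic group Sp(2g, F₂) of 2g × 2g matrices over the field with two elements preserving the standard symplectic form (Mathlib's Matrix.symplecticGroup (Fin g) (ZMod 2)). -/
/-!
Write `E ⊆ F₂^{2g+2}` for the even-weight vectors (sums of branch points) and `𝟙` for the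
all-ones vector. The `2`-torsion of the Jacobian is `E / ⟨𝟙⟩` with the Weil pairing induced by the
dot product, and a permutation of the branch points acts by permuting coordinates, which preserves
the dot product and fixes `𝟙`. Modulo `𝟙`, the vectors `α_i = e_0 + ⋯ + e_{2i+1}` and
`β_i = e_{2i+1} + e_{2i+2}` form a basis of `E` with Gram matrix `J` (as `-1 = 1`), so every
permutation acts by a symplectic matrix. A permutation `σ` acting trivially moves every `e_a - e_c`
by a multiple of `𝟙`. If `σ a ≠ a`, take `c ∉ {a, σ a, σ⁻¹ a}`; with at least five points there is
a coordinate outside `{a, σ a, c, σ c}`, where this multiple is `0`, while at `a` it is `-1`.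
-/

open Matrix Finset Equiv LinearMap

section CoordinatesModConstants

variable {R n ι : Type*} [CommRing R] [Fintype n] [DecidableEq ι]

/-- `B` induces a basis of `{v | v ⬝ᵥ 1 = 0} / R ∙ 1`, whose coordinates are `(· ⬝ᵥ B' r)`. -/
structure IsDualBasisModConst (B B' : ι → n → R) : Prop where
  dotProduct_dual : ∀ r s, B r ⬝ᵥ B' s = (1 : Matrix ι ι R) r s
  dotProduct_one : ∀ r, B r ⬝ᵥ 1 = 0
  dual_dotProduct_one : ∀ r, B' r ⬝ᵥ 1 = 0
  exists_eq_smul_one_of_dotProduct_dual_eq_zero :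
    ∀ w : n → R, w ⬝ᵥ 1 = 0 → (∀ r, w ⬝ᵥ B' r = 0) → ∃ c : R, w = c • 1

/-- The matrix of `T` on `{v | v ⬝ᵥ 1 = 0} / R ∙ 1` in the basis induced by `B`. -/
def coordMatrix (B B' : ι → n → R) (T : (n → R) →ₗ[R] n → R) : Matrix ι ι R :=
  Matrix.of fun r c => T (B c) ⬝ᵥ B' r

namespace IsDualBasisModConst

variable {B B' : ι → n → R} {T S : (n → R) →ₗ[R] n → R}

theorem sum_smul_dotProduct_dual [Fintype ι] (hB : IsDualBasisModConst B B') (a : ι → R)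
    (s : ι) : (∑ r, a r • B r) ⬝ᵥ B' s = a s := by
  simp [sum_dotProduct, smul_dotProduct, hB.dotProduct_dual, Matrix.one_apply]

theorem sum_smul_dotProduct_one [Fintype ι] (hB : IsDualBasisModConst B B') (a : ι → R) :
    (∑ r, a r • B r) ⬝ᵥ 1 = 0 := by
  simp [sum_dotProduct, smul_dotProduct, hB.dotProduct_one]

theorem exists_eq_sum_add_smul_one [Fintype ι] (hB : IsDualBasisModConst B B') {v : n → R}
    (hv : v ⬝ᵥ 1 = 0) :
    ∃ c : R, v = ∑ r, (v ⬝ᵥ B' r) • B r + c • 1 := by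
  obtain ⟨c, hc⟩ := hB.exists_eq_smul_one_of_dotProduct_dual_eq_zero
    (v - ∑ r, (v ⬝ᵥ B' r) • B r)
    (by rw [sub_dotProduct, hv, hB.sum_smul_dotProduct_one, sub_zero])
    (fun s => by rw [sub_dotProduct, hB.sum_smul_dotProduct_dual, sub_self])
  exact ⟨c, by rw [← hc, add_sub_cancel]⟩

theorem exists_map_eq_sum_add_smul_one [Fintype ι] (hB : IsDualBasisModConst B B')
    (hT : ∀ v, T v ⬝ᵥ 1 = v ⬝ᵥ 1) (c : ι) :
    ∃ d : R, T (B c) = ∑ r, coordMatrix B B' T r c • B r + d • 1 :=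
  hB.exists_eq_sum_add_smul_one (by rw [hT, hB.dotProduct_one])

theorem coordMatrix_id (hB : IsDualBasisModConst B B') : coordMatrix B B' LinearMap.id = 1 := by
  ext r c
  rw [coordMatrix, of_apply, LinearMap.id_apply, hB.dotProduct_dual]
  simp only [one_apply, eq_comm]

theorem coordMatrix_comp [Fintype ι] (hB : IsDualBasisModConst B B') (hT1 : T 1 = 1)
    (hS : ∀ v, S v ⬝ᵥ 1 = v ⬝ᵥ 1) :
    coordMatrix B B' (T ∘ₗ S) = coordMatrix B B' T * coordMatrix B B' S := by
  ext r c
  obtain ⟨d, hd⟩ := hB.exists_map_eq_sum_add_smul_one hS c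
  have h1r : (1 : n → R) ⬝ᵥ B' r = 0 := by rw [dotProduct_comm, hB.dual_dotProduct_one]
  change T (S (B c)) ⬝ᵥ B' r = _
  simp only [hd, map_add, map_sum, map_smul, hT1, add_dotProduct, sum_dotProduct, smul_dotProduct,
    h1r, smul_zero, add_zero, mul_apply]
  exact Finset.sum_congr rfl fun s _ => mul_comm _ _

theorem exists_map_eq_add_smul_one_of_coordMatrix_eq_one [Fintype ι]
    (hB : IsDualBasisModConst B B') (hT1 : T 1 = 1) (hT : ∀ v, T v ⬝ᵥ 1 = v ⬝ᵥ 1)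
    (h : coordMatrix B B' T = 1) {v : n → R} (hv : v ⬝ᵥ 1 = 0) :
    ∃ c : R, T v = v + c • 1 := by
  have hBr : ∀ r, ∃ d : R, T (B r) = B r + d • 1 := fun r => by
    simpa [h, one_apply, ite_smul] using hB.exists_map_eq_sum_add_smul_one hT r
  choose d hd using hBr
  obtain ⟨c, hc⟩ := hB.exists_eq_sum_add_smul_one hv
  set a := fun r => v ⬝ᵥ B' r
  refine ⟨∑ r, a r * d r, ?_⟩
  rw [hc]
  simp only [map_add, map_sum, map_smul, hd, hT1, smul_add, sum_add_distrib, smul_smul,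
    ← sum_smul]
  abel

theorem transpose_coordMatrix_mul_gram_mul [Fintype ι] (hB : IsDualBasisModConst B B')
    (hT : ∀ u v, T u ⬝ᵥ T v = u ⬝ᵥ v) (hT1 : T 1 = 1) :
    (coordMatrix B B' T)ᵀ * of (fun r s => B r ⬝ᵥ B s) * coordMatrix B B' T =
      of fun r s => B r ⬝ᵥ B s := by
  have hT' : ∀ v, T v ⬝ᵥ 1 = v ⬝ᵥ 1 := fun v => by simpa [hT1] using hT v 1
  ext r c
  obtain ⟨d, hd⟩ := hB.exists_map_eq_sum_add_smul_one hT' r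
  obtain ⟨e, he⟩ := hB.exists_map_eq_sum_add_smul_one hT' c
  set M := coordMatrix B B' T
  have hTc : 1 ⬝ᵥ T (B c) = 0 := by rw [dotProduct_comm, hT', hB.dotProduct_one]
  calc (Mᵀ * of (fun r s => B r ⬝ᵥ B s) * M) r c
      = (∑ s, M s r • B s) ⬝ᵥ (∑ t, M t c • B t) := by
        simp only [mul_apply, transpose_apply, of_apply, sum_dotProduct, dotProduct_sum,
          smul_dotProduct, dotProduct_smul, smul_eq_mul, sum_mul, mul_sum]
        exact sum_congr rfl fun t _ => sum_congr rfl fun s _ => mul_comm _ _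
    _ = (∑ s, M s r • B s) ⬝ᵥ T (B c) := by
        rw [he, dotProduct_add, dotProduct_smul, hB.sum_smul_dotProduct_one, smul_zero, add_zero]
    _ = T (B r) ⬝ᵥ T (B c) := by
        rw [hd, add_dotProduct, smul_dotProduct, hTc, smul_zero, add_zero]
    _ = B r ⬝ᵥ B c := hT _ _

end IsDualBasisModConst

end CoordinatesModConstants

section Permutations

variable {R n : Type*}

theorem funLeft_perm_inv_dotProduct [Semiring R] [Fintype n] (σ : Perm n) (u v : n → R) :
    funLeft R R ⇑σ⁻¹ u ⬝ᵥ funLeft R R ⇑σ⁻¹ v = u ⬝ᵥ v :=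
  Equiv.sum_comp σ⁻¹ fun k => u k * v k

theorem funLeft_perm_inv_dotProduct_one [Semiring R] [Fintype n] (σ : Perm n) (v : n → R) :
    funLeft R R ⇑σ⁻¹ v ⬝ᵥ 1 = v ⬝ᵥ 1 :=
  funLeft_perm_inv_dotProduct σ v 1

theorem funLeft_perm_inv_mul [Semiring R] (σ τ : Perm n) :
    funLeft R R ⇑(σ * τ)⁻¹ = funLeft R R ⇑σ⁻¹ ∘ₗ funLeft R R ⇑τ⁻¹ := by
  rw [_root_.mul_inv_rev, Perm.coe_mul, funLeft_comp]

theorem Equiv.Perm.eq_one_of_forall_funLeft_eq_add_smul_one [CommRing R] [Nontrivial R]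
    [Fintype n] [DecidableEq n] (hn : 5 ≤ Fintype.card n) {σ : Perm n}
    (h : ∀ v : n → R, v ⬝ᵥ 1 = 0 → ∃ c : R, funLeft R R ⇑σ⁻¹ v = v + c • 1) : σ = 1 := by
  have exists_notMem (s : Finset n) (hs : #s < 5) : ∃ m, m ∉ s := by
    obtain ⟨m, -, hm⟩ := exists_mem_notMem_of_card_lt_card (t := univ) (s := s)
      (by rw [card_univ]; omega)
    exact ⟨m, hm⟩
  by_contra hσ
  obtain ⟨a, ha⟩ : ∃ a, σ a ≠ a := by
    by_contra! h'
    exact hσ (Equiv.ext h')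
  obtain ⟨c, hc⟩ := exists_notMem {a, σ a, σ⁻¹ a} (by grind [card_le_three])
  obtain ⟨m, hm⟩ := exists_notMem {a, σ a, c, σ c} (by grind [card_le_four])
  simp only [mem_insert, mem_singleton, not_or] at hc hm
  obtain ⟨d, hd⟩ := h (Pi.single a 1 - Pi.single c 1)
    (by simp [sub_dotProduct, single_dotProduct])
  have at_a := congrFun hd a
  have at_m := congrFun hd m
  simp only [Perm.inv_def, eq_symm_apply] at hc
  simp only [funLeft_apply, Perm.inv_def, Pi.sub_apply, Pi.single_apply, symm_apply_eq,
    Pi.add_apply, Pi.smul_apply, Pi.one_apply, smul_eq_mul, mul_one, ha.symm, Ne.symm hc.1,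
    Ne.symm hc.2.2, hm.1, hm.2.1, hm.2.2.1, hm.2.2.2, if_false, if_true, sub_zero] at at_a at_m
  exact one_ne_zero (by linear_combination -at_a + at_m : (1 : R) = 0)

end Permutations

section FinVectors

variable {R : Type*} [Semiring R] {N : ℕ}

def prefixVec (m : ℕ) : Fin N → R := fun k => if (k : ℕ) < m then 1 else 0

def pairVec (a b : Fin N) : Fin N → R := Pi.single a 1 + Pi.single b 1

theorem dotProduct_pairVec (w : Fin N → R) (a b : Fin N) : w ⬝ᵥ pairVec a b = w a + w b := by
  rw [pairVec, dotProduct_add, dotProduct_single, dotProduct_single, mul_one, mul_one]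

theorem prefixVec_zero : (prefixVec 0 : Fin N → R) = 0 := by
  ext k; simp [prefixVec]

theorem prefixVec_of_le {m : ℕ} (h : N ≤ m) : (prefixVec m : Fin N → R) = 1 := by
  ext k; simp [prefixVec, show (k : ℕ) < m by omega]

theorem prefixVec_add_two {N : ℕ} (i : Fin N) :
    (prefixVec (i + 2) : Fin (N + 1) → R) = prefixVec i + pairVec i.castSucc i.succ := by
  ext k
  simp only [prefixVec, pairVec, Pi.add_apply, Pi.single_apply, Fin.ext_iff, Fin.val_castSucc,
    Fin.val_succ]
  split_ifs <;> first | (exfalso; omega) | simp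

theorem prefixVec_dotProduct_prefixVec (m m' : ℕ) :
    (prefixVec m : Fin N → R) ⬝ᵥ prefixVec m' = (min N (min m m') : ℕ) := by
  simp only [dotProduct, prefixVec, mul_ite, mul_one, mul_zero, ← ite_and, ← lt_min_iff]
  rw [sum_boole, Fin.card_filter_val_lt, min_comm m']

end FinVectors

section SymplecticFamily

variable (R : Type*) [CommRing R] [CharP R 2] {g : ℕ}

def alphaVec (i : Fin g) : Fin (2 * g + 2) → R := prefixVec (2 * i + 2)

def betaVec (i : Fin g) : Fin (2 * g + 2) → R :=
  pairVec ⟨2 * i + 1, by omega⟩ ⟨2 * i + 2, by omega⟩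

def symplecticFamily (g : ℕ) : Fin g ⊕ Fin g → Fin (2 * g + 2) → R :=
  Sum.elim (alphaVec R) (betaVec R)

def dualSymplecticFamily (g : ℕ) : Fin g ⊕ Fin g → Fin (2 * g + 2) → R :=
  Sum.elim (betaVec R) (alphaVec R)

variable {R}

theorem alphaVec_dotProduct_alphaVec (i j : Fin g) : alphaVec R i ⬝ᵥ alphaVec R j = 0 := by
  rw [alphaVec, alphaVec, prefixVec_dotProduct_prefixVec,
    show min (2 * g + 2) (min (2 * i + 2) (2 * j + 2)) = 2 * (min (i : ℕ) j + 1) by omega,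
    (CharP.cast_eq_zero_iff R 2 _).mpr (dvd_mul_right 2 _)]

theorem alphaVec_dotProduct_one (i : Fin g) : alphaVec R i ⬝ᵥ 1 = 0 := by
  rw [alphaVec, ← prefixVec_of_le le_rfl, prefixVec_dotProduct_prefixVec,
    show min (2 * g + 2) (min (2 * i + 2) (2 * g + 2)) = 2 * (i + 1 : ℕ) by omega,
    (CharP.cast_eq_zero_iff R 2 _).mpr (dvd_mul_right 2 _)]

theorem betaVec_dotProduct_one (i : Fin g) : betaVec R i ⬝ᵥ 1 = 0 := by
  rw [dotProduct_comm, betaVec, dotProduct_pairVec, Pi.one_apply, Pi.one_apply,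
    CharTwo.add_self_eq_zero]

theorem alphaVec_dotProduct_betaVec (i j : Fin g) :
    alphaVec R i ⬝ᵥ betaVec R j = if i = j then 1 else 0 := by
  rw [betaVec, dotProduct_pairVec]
  simp only [alphaVec, prefixVec, Fin.ext_iff]
  split_ifs <;> first | (exfalso; omega) | simp [CharTwo.add_self_eq_zero]

theorem betaVec_dotProduct_betaVec (i j : Fin g) : betaVec R i ⬝ᵥ betaVec R j = 0 := by
  rw [betaVec, betaVec, dotProduct_pairVec]
  simp only [pairVec, Pi.add_apply, Pi.single_apply, Fin.ext_iff]
  split_ifs <;> first | (exfalso; omega) | simp [CharTwo.add_self_eq_zero]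

theorem exists_eq_smul_one_of_orthogonal {w : Fin (2 * g + 2) → R} (hw : w ⬝ᵥ 1 = 0)
    (hα : ∀ i, w ⬝ᵥ alphaVec R i = 0) (hβ : ∀ i, w ⬝ᵥ betaVec R i = 0) : ∃ c : R, w = c • 1 := by
  have hprefix : ∀ s ≤ g + 1, w ⬝ᵥ prefixVec (2 * s) = 0 := by
    intro s hs
    rcases Nat.eq_zero_or_pos s with rfl | hs0
    · rw [prefixVec_zero, dotProduct_zero]
    rcases hs.lt_or_eq with hs | rfl
    · simpa [alphaVec, show 2 * (s - 1) + 2 = 2 * s by omega] using hα ⟨s - 1, by omega⟩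
    · rwa [prefixVec_of_le (m := 2 * (g + 1)) (by omega)]
  -- `w` is orthogonal to each `e_m + e_{m+1}`: for odd `m` this is a `β`, for even `m` the
  -- difference of two of the prefix vectors `0, α_0, …, α_{g-1}, 𝟙`.
  have hsucc : ∀ i : Fin (2 * g + 1), w i.succ = w i.castSucc := by
    intro i
    obtain ⟨t, ht | ht⟩ := Nat.even_or_odd' i
    · have key := congrArg (w ⬝ᵥ ·) (prefixVec_add_two (R := R) i)
      simp only [dotProduct_add, dotProduct_pairVec, ht, hprefix t (by omega),
        show 2 * t + 2 = 2 * (t + 1) by ring, hprefix (t + 1) (by omega), zero_add] at key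
      exact (CharTwo.add_eq_zero.mp key.symm).symm
    · have key := hβ ⟨t, by omega⟩
      rw [betaVec, dotProduct_pairVec] at key
      convert (CharTwo.add_eq_zero.mp key).symm using 2 <;> ext <;> simp [ht]
  refine ⟨w 0, funext fun k => ?_⟩
  induction k using Fin.induction with
  | zero => simp
  | succ i ih => rw [hsucc, ih]; simp

end SymplecticFamily

section Representation

variable (R : Type*) [CommRing R] [CharP R 2]

theorem isDualBasisModConst_symplecticFamily (g : ℕ) :
    IsDualBasisModConst (symplecticFamily R g) (dualSymplecticFamily R g) where
  dotProduct_dual r s := by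
    rcases r with i | i <;> rcases s with j | j <;>
      simp [symplecticFamily, dualSymplecticFamily, alphaVec_dotProduct_betaVec,
        alphaVec_dotProduct_alphaVec, betaVec_dotProduct_betaVec, one_apply]
    rw [dotProduct_comm, alphaVec_dotProduct_betaVec]
    simp only [eq_comm]
  dotProduct_one r := by
    rcases r with i | i
    exacts [alphaVec_dotProduct_one i, betaVec_dotProduct_one i]
  dual_dotProduct_one r := by
    rcases r with i | i
    exacts [betaVec_dotProduct_one i, alphaVec_dotProduct_one i]
  exists_eq_smul_one_of_dotProduct_dual_eq_zero _ hw h :=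
    exists_eq_smul_one_of_orthogonal hw (fun i => h (.inr i)) (fun i => h (.inl i))

theorem gram_symplecticFamily (g : ℕ) :
    of (fun r s => symplecticFamily R g r ⬝ᵥ symplecticFamily R g s) = J (Fin g) R := by
  ext r s
  rcases r with i | i <;> rcases s with j | j <;>
    simp [symplecticFamily, J, alphaVec_dotProduct_betaVec, alphaVec_dotProduct_alphaVec,
      betaVec_dotProduct_betaVec, one_apply, CharTwo.neg_eq]
  rw [dotProduct_comm, alphaVec_dotProduct_betaVec]
  simp only [eq_comm]

theorem coordMatrix_funLeft_perm_inv_mem_symplecticGroup (g : ℕ) (σ : Perm (Fin (2 * g + 2))) :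
    coordMatrix (symplecticFamily R g) (dualSymplecticFamily R g) (funLeft R R ⇑σ⁻¹) ∈
      symplecticGroup (Fin g) R := by
  rw [SymplecticGroup.mem_iff', ← gram_symplecticFamily]
  exact (isDualBasisModConst_symplecticFamily R g).transpose_coordMatrix_mul_gram_mul
    (funLeft_perm_inv_dotProduct σ) rfl

def symplecticRep (g : ℕ) : Perm (Fin (2 * g + 2)) →* symplecticGroup (Fin g) R where
  toFun σ := ⟨_, coordMatrix_funLeft_perm_inv_mem_symplecticGroup R g σ⟩
  map_one' := Subtype.ext (isDualBasisModConst_symplecticFamily R g).coordMatrix_id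
  map_mul' σ τ := Subtype.ext <| by
    simp only [funLeft_perm_inv_mul]
    exact (isDualBasisModConst_symplecticFamily R g).coordMatrix_comp rfl
      (funLeft_perm_inv_dotProduct_one τ)

variable {R}

theorem symplecticRep_injective {g : ℕ} (hg : 2 ≤ g) :
    Function.Injective (symplecticRep R g) := by
  have : Nontrivial R := CharP.nontrivial_of_char_ne_one (v := 2) (by norm_num)
  rw [injective_iff_map_eq_one]
  intro σ hσ
  refine Perm.eq_one_of_forall_funLeft_eq_add_smul_one (R := R) (by simp; omega) fun v hv => ?_
  exact (isDualBasisModConst_symplecticFamily R g).exists_map_eq_add_smul_one_of_coordMatrix_eq_one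
    rfl (funLeft_perm_inv_dotProduct_one σ) (congrArg Subtype.val hσ) hv

end Representation

/-- Permuting the `2g+2` branch points of a hyperelliptic curve of genus `g ≥ 2` gives an
embedding of the symmetric group `S_{2g+2}` into the symplectic group `Sp(2g, F₂)`. -/
theorem stmt9 (g : ℕ) (hg : 2 ≤ g) :
    ∃ f : Equiv.Perm (Fin (2 * g + 2)) →* Matrix.symplecticGroup (Fin g) (ZMod 2),
      Function.Injective f :=
  ⟨symplecticRep (ZMod 2) g, symplecticRep_injective hg⟩
end

section
/- For every integer g ≥ 2, the factorial (2g+2)! divides the order of the symplectic group Sp(2g, F₂) (i.e., (2g+2)! divides Nat.card of Matrix.symplecticGroup (Fin g) (ZMod 2)). -/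
/-!
`S_{2g+2}` permutes the coordinates of `F₂^{2g+2}`, preserving the dot product, the
even-weight vectors and the all-ones vector `𝟙`. Modulo `𝟙`, the even-weight vectors carry a
symplectic form, and the columns `a_j` of `basisMatrix g` (indicators of `{0, …, 2i+1}` and of
`{2i+1, 2i+2}`) give a symplectic basis: their Gram matrix is `J`.

Adjoining `e = e_{2g+1}` and `𝟙 + e`, which are orthonormal and orthogonal to every `a_j`, gives a
square matrix with invertible Gram matrix. Hence `A J Aᵀ + E Eᵀ = 1`, and every even-weight `X`
satisfies `X = A (J Aᵀ X) + 𝟙 ⊗ X_{2g+1}`. For the row-permuted `A` this shows that `σ` acts on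
the quotient by the matrix `rep σ = J Aᵀ Pσ A`, which is therefore multiplicative and symplectic.

If `rep σ = 1`, then `σ` changes each column `a_j` by a constant. A column of weight `2` cannot be
sent to its complement, which has weight `2g ≠ 2`. So `σ` preserves `{0, 1}` and `{1, 2}`, fixes
`0`, and hence changes no column at all. Since the rows of `A` are distinct, `σ = 1`. Lagrange's
theorem then gives `(2g+2)! ∣ |Sp(2g, F₂)|`.
-/

open Matrix Finset

theorem Matrix.J_mul_J_of_charTwo {l R : Type*} [DecidableEq l] [Fintype l] [CommRing R]
    [CharP R 2] : J l R * J l R = 1 := by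
  ext i j
  rw [J_squared, neg_apply, CharTwo.neg_eq]

section

variable {m k l n R : Type*} [CommRing R] [Fintype m] [Fintype k]

theorem Matrix.transpose_mul_self_mul_add_vecMulVec (A : Matrix m k R) (Y : Matrix k n R)
    (u : m → R) (r : n → R) (hA : u ᵥ* A = 0) (hu : u ⬝ᵥ u = 0) :
    (A * Y + vecMulVec u r)ᵀ * (A * Y + vecMulVec u r) = Yᵀ * (Aᵀ * A) * Y := by
  have hAu : Aᵀ *ᵥ u = 0 := by rw [mulVec_transpose, hA]
  rw [transpose_add, transpose_mul, transpose_vecMulVec, Matrix.add_mul, Matrix.mul_add,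
    Matrix.mul_add, vecMulVec_mul_vecMulVec, hu, zero_smul, vecMulVec_zero, mul_vecMulVec,
    ← mulVec_mulVec, hAu, mulVec_zero, zero_vecMulVec, vecMulVec_mul, ← vecMul_vecMul, hA,
    zero_vecMul, vecMulVec_zero]
  simp only [add_zero, Matrix.mul_assoc]

theorem Matrix.mul_transpose_mul_mul_add_vecMulVec [DecidableEq k] (A : Matrix m k R)
    (P : Matrix k k R) (hP : P * (Aᵀ * A) = 1) (u : m → R) (hA : u ᵥ* A = 0)
    (Y : Matrix k n R) (r : n → R) : P * Aᵀ * (A * Y + vecMulVec u r) = Y := by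
  rw [Matrix.mul_add, mul_vecMulVec, ← mulVec_mulVec, mulVec_transpose, hA, mulVec_zero,
    zero_vecMulVec, add_zero, ← Matrix.mul_assoc, Matrix.mul_assoc P, hP, Matrix.one_mul]

theorem Matrix.mul_mul_transpose_add_mul_transpose_eq_one [DecidableEq m] [DecidableEq k]
    [Fintype l] [DecidableEq l] (e : m ≃ k ⊕ l) {A : Matrix m k R} {E : Matrix m l R}
    {P : Matrix k k R} (hP : P * (Aᵀ * A) = 1) (hAE : Aᵀ * E = 0) (hE : Eᵀ * E = 1) :
    A * (P * Aᵀ) + E * Eᵀ = 1 := by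
  have hEA : Eᵀ * A = 0 := by simpa using congrArg transpose hAE
  rw [← fromCols_mul_fromRows, fromCols_mul_fromRows_eq_one_comm e, fromRows_mul_fromCols,
    Matrix.mul_assoc, hP, Matrix.mul_assoc, hAE, Matrix.mul_zero, hEA, hE, fromBlocks_one]

end

theorem two_mul_card_eq_card_of_map_eq_add_one {α : Type*} [Fintype α] (σ : Equiv.Perm α)
    (f : α → ZMod 2) (h : ∀ a, f (σ a) = f a + 1) :
    2 * Fintype.card {a // f a = 1} = Fintype.card α := by
  have hσ : Fintype.card {a // ¬ f a = 1} = Fintype.card {a // f a = 1} :=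
    Fintype.card_congr (σ.subtypeEquiv fun a => by rw [h]; generalize f a = x; revert x; decide)
  have := Fintype.card_subtype_compl (fun a => f a = 1)
  have := Fintype.card_subtype_le (fun a => f a = 1)
  omega

theorem Fin.card_filter_val_mem {n : ℕ} (s : Finset ℕ) (hs : ∀ x ∈ s, x < n) :
    (univ.filter fun m : Fin n => (m : ℕ) ∈ s).card = s.card := by
  rw [← card_map Fin.valEmbedding]
  congr 1
  ext x
  simp only [mem_map, mem_filter, mem_univ, true_and, Fin.valEmbedding_apply]
  exact ⟨fun ⟨a, ha, hax⟩ => hax ▸ ha, fun hx => ⟨⟨x, hs x hx⟩, hx, rfl⟩⟩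

theorem Fin.sum_ite_val_mem {R : Type*} [AddCommMonoidWithOne R] {n : ℕ} (s : Finset ℕ)
    (hs : ∀ x ∈ s, x < n) : ∑ m : Fin n, (if (m : ℕ) ∈ s then (1 : R) else 0) = s.card := by
  rw [sum_boole, Fin.card_filter_val_mem s hs]

theorem Finset.card_inter_pair {α : Type*} [DecidableEq α] (s : Finset α) {a b : α}
    (hab : a ≠ b) :
    (s ∩ {a, b}).card = (if a ∈ s then 1 else 0) + (if b ∈ s then 1 else 0) := by
  rw [inter_comm, ← filter_mem_eq_inter, card_filter, sum_pair hab]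

namespace PermToSymplectic

variable {g : ℕ}

def support : Fin g ⊕ Fin g → Finset ℕ :=
  Sum.elim (fun i => range (2 * i + 2)) (fun i => {2 * (i : ℕ) + 1, 2 * (i : ℕ) + 2})

lemma lt_of_mem_support {j : Fin g ⊕ Fin g} {x : ℕ} (hx : x ∈ support j) : x < 2 * g + 2 := by
  rcases j with i | i <;>
    simp only [support, Sum.elim_inl, Sum.elim_inr, mem_range, mem_insert, mem_singleton] at hx <;>
    omega

variable (g) in
def basisMatrix : Matrix (Fin (2 * g + 2)) (Fin g ⊕ Fin g) (ZMod 2) :=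
  of fun m j => if (m : ℕ) ∈ support j then 1 else 0

lemma basisMatrix_eq_one_iff {m : Fin (2 * g + 2)} {j : Fin g ⊕ Fin g} :
    basisMatrix g m j = 1 ↔ (m : ℕ) ∈ support j := by
  simp [basisMatrix]

lemma transpose_mul_basisMatrix : (basisMatrix g)ᵀ * basisMatrix g = J (Fin g) (ZMod 2) := by
  ext j k
  have hcard : ∑ m, basisMatrix g m j * basisMatrix g m k = (support j ∩ support k).card := by
    simp only [basisMatrix, of_apply, ite_zero_mul_ite_zero, one_mul, ← mem_inter]
    exact Fin.sum_ite_val_mem _ fun x hx => lt_of_mem_support (mem_inter.1 hx).1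
  simp only [mul_apply, transpose_apply, hcard]
  have hpair : ∀ i : Fin g, 2 * (i : ℕ) + 1 ≠ 2 * i + 2 := fun _ => by omega
  rcases j with i | i <;> rcases k with k | k
  · simp [support, range_inter_range, J, CharTwo.two_eq_zero]
  · simp only [support, Sum.elim_inl, Sum.elim_inr, card_inter_pair _ (hpair k), mem_range, J,
      fromBlocks_apply₁₂, Matrix.neg_apply, one_apply]
    split_ifs <;> first | omega | decide
  · simp only [support, Sum.elim_inl, Sum.elim_inr, inter_comm, card_inter_pair _ (hpair i),
      mem_range, J, fromBlocks_apply₂₁, one_apply]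
    split_ifs <;> first | omega | decide
  · simp only [support, Sum.elim_inr, card_inter_pair _ (hpair k), mem_insert, mem_singleton, J,
      fromBlocks_apply₂₂, Matrix.zero_apply]
    split_ifs <;> first | omega | decide

lemma J_mul_transpose_mul_basisMatrix :
    J (Fin g) (ZMod 2) * ((basisMatrix g)ᵀ * basisMatrix g) = 1 := by
  rw [transpose_mul_basisMatrix, J_mul_J_of_charTwo]

lemma one_vecMul_basisMatrix : 1 ᵥ* basisMatrix g = 0 := by
  ext j
  rw [vecMul, one_dotProduct]
  simp only [basisMatrix, of_apply, Pi.zero_apply]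
  rw [Fin.sum_ite_val_mem _ fun x => lt_of_mem_support]
  rcases j with i | i <;> simp [support, CharTwo.two_eq_zero]

lemma basisMatrix_last (j : Fin g ⊕ Fin g) : basisMatrix g (Fin.last _) j = 0 := by
  rw [basisMatrix, of_apply, ite_eq_right_iff, Fin.val_last]
  intro h
  rcases j with i | i <;>
    simp only [support, Sum.elim_inl, Sum.elim_inr, mem_range, mem_insert, mem_singleton] at h <;>
    omega

variable (g) in
def complementMatrix : Matrix (Fin (2 * g + 2)) (Fin 2) (ZMod 2) :=
  (of ![1 + Pi.single (Fin.last _) 1, Pi.single (Fin.last _) 1])ᵀ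

lemma transpose_basisMatrix_mul_complementMatrix :
    (basisMatrix g)ᵀ * complementMatrix g = 0 := by
  rw [complementMatrix, ← transpose_mul]
  have hlast : (basisMatrix g).row (Fin.last _) = 0 := funext basisMatrix_last
  simp only [cons_mul, add_vecMul, one_vecMul_basisMatrix, single_vecMul, hlast, smul_zero,
    add_zero, Matrix.empty_mul, Equiv.symm_apply_apply, transpose_eq_zero]
  ext a b
  fin_cases a <;> rfl

lemma transpose_complementMatrix_mul_self :
    (complementMatrix g)ᵀ * complementMatrix g = 1 := by
  rw [complementMatrix, transpose_transpose]
  simp only [cons_mul, vecMul_transpose, cons_mulVec, dotProduct_add, add_dotProduct,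
    one_dotProduct_one, single_dotProduct, dotProduct_single, Pi.add_apply, Pi.one_apply,
    Pi.single_eq_same, empty_mulVec, Matrix.empty_mul, Equiv.symm_apply_apply]
  ext a b
  fin_cases a <;> fin_cases b <;> simp [one_apply, CharTwo.two_eq_zero, CharTwo.add_self_eq_zero]

lemma complementMatrix_mul_transpose_mul {ι : Type*} (X : Matrix (Fin (2 * g + 2)) ι (ZMod 2))
    (hX : 1 ᵥ* X = 0) :
    complementMatrix g * ((complementMatrix g)ᵀ * X) = vecMulVec 1 (X (Fin.last _)) := by
  rw [complementMatrix, transpose_transpose]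
  simp only [cons_mul, add_vecMul, hX, single_one_vecMul, zero_add, Matrix.empty_mul,
    Equiv.symm_apply_apply]
  ext m k
  simp [mul_apply, Fin.sum_univ_two, add_mul, add_assoc, CharTwo.add_self_eq_zero]

lemma basisMatrix_mul_J_mul_transpose_add :
    basisMatrix g * (J (Fin g) (ZMod 2) * (basisMatrix g)ᵀ) +
      complementMatrix g * (complementMatrix g)ᵀ = 1 :=
  mul_mul_transpose_add_mul_transpose_eq_one
    (Fintype.equivOfCardEq (by simp only [Fintype.card_fin, Fintype.card_sum]; omega))
    J_mul_transpose_mul_basisMatrix transpose_basisMatrix_mul_complementMatrix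
    transpose_complementMatrix_mul_self

theorem eq_basisMatrix_mul_add_vecMulVec {ι : Type*} (X : Matrix (Fin (2 * g + 2)) ι (ZMod 2))
    (hX : 1 ᵥ* X = 0) :
    X = basisMatrix g * (J (Fin g) (ZMod 2) * (basisMatrix g)ᵀ * X) +
      vecMulVec 1 (X (Fin.last _)) := by
  conv_lhs => rw [← Matrix.one_mul X, ← basisMatrix_mul_J_mul_transpose_add]
  rw [Matrix.add_mul, Matrix.mul_assoc (complementMatrix g),
    complementMatrix_mul_transpose_mul X hX]
  simp only [Matrix.mul_assoc]

variable (g) in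
/-- Rows are permuted by `σ⁻¹`, so that `rep g` is a homomorphism rather than an
anti-homomorphism. -/
def rep (σ : Equiv.Perm (Fin (2 * g + 2))) : Matrix (Fin g ⊕ Fin g) (Fin g ⊕ Fin g) (ZMod 2) :=
  J (Fin g) (ZMod 2) * (basisMatrix g)ᵀ * (basisMatrix g).submatrix ⇑σ⁻¹ id

lemma submatrix_basisMatrix_eq (σ : Equiv.Perm (Fin (2 * g + 2))) :
    (basisMatrix g).submatrix ⇑σ⁻¹ id =
      basisMatrix g * rep g σ + vecMulVec 1 (basisMatrix g (σ⁻¹ (Fin.last _))) := by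
  refine eq_basisMatrix_mul_add_vecMulVec _ ?_
  rw [submatrix_vecMul_equiv, Pi.one_comp, one_vecMul_basisMatrix, Pi.zero_comp]

lemma rep_eq_of_submatrix_eq {σ : Equiv.Perm (Fin (2 * g + 2))}
    {Y : Matrix (Fin g ⊕ Fin g) (Fin g ⊕ Fin g) (ZMod 2)} {r : Fin g ⊕ Fin g → ZMod 2}
    (h : (basisMatrix g).submatrix ⇑σ⁻¹ id = basisMatrix g * Y + vecMulVec 1 r) :
    rep g σ = Y := by
  rw [rep, h]
  exact mul_transpose_mul_mul_add_vecMulVec _ _ J_mul_transpose_mul_basisMatrix _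
    one_vecMul_basisMatrix _ _

lemma rep_one : rep g 1 = 1 := by
  rw [rep, inv_one, Equiv.Perm.coe_one, submatrix_id_id, Matrix.mul_assoc,
    J_mul_transpose_mul_basisMatrix]

lemma rep_mul (σ τ : Equiv.Perm (Fin (2 * g + 2))) : rep g (σ * τ) = rep g σ * rep g τ := by
  apply rep_eq_of_submatrix_eq
  calc (basisMatrix g).submatrix ⇑(σ * τ)⁻¹ id
      = ((basisMatrix g).submatrix ⇑τ⁻¹ id).submatrix ⇑σ⁻¹ id := by
        rw [submatrix_submatrix]; rfl
    _ = (basisMatrix g).submatrix ⇑σ⁻¹ id * rep g τ +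
          vecMulVec 1 (basisMatrix g (τ⁻¹ (Fin.last _))) := by
        rw [submatrix_basisMatrix_eq τ]; rfl
    _ = basisMatrix g * (rep g σ * rep g τ) + vecMulVec 1
          (basisMatrix g (σ⁻¹ (Fin.last _)) ᵥ* rep g τ + basisMatrix g (τ⁻¹ (Fin.last _))) := by
        rw [submatrix_basisMatrix_eq σ, Matrix.add_mul, Matrix.mul_assoc, vecMulVec_mul,
          vecMulVec_add, add_assoc]

lemma rep_mem (σ : Equiv.Perm (Fin (2 * g + 2))) :
    rep g σ ∈ symplecticGroup (Fin g) (ZMod 2) := by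
  have hone : (1 : Fin (2 * g + 2) → ZMod 2) ⬝ᵥ 1 = 0 := by
    simp [one_dotProduct_one, CharTwo.two_eq_zero]
  rw [SymplecticGroup.mem_iff']
  calc (rep g σ)ᵀ * J (Fin g) (ZMod 2) * rep g σ
      = (rep g σ)ᵀ * ((basisMatrix g)ᵀ * basisMatrix g) * rep g σ := by
        rw [transpose_mul_basisMatrix]
    _ = ((basisMatrix g).submatrix ⇑σ⁻¹ id)ᵀ * (basisMatrix g).submatrix ⇑σ⁻¹ id := by
        rw [submatrix_basisMatrix_eq σ, transpose_mul_self_mul_add_vecMulVec _ _ _ _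
          one_vecMul_basisMatrix hone]
    _ = J (Fin g) (ZMod 2) := by
        rw [transpose_submatrix, submatrix_mul_equiv, submatrix_id_id, transpose_mul_basisMatrix]

lemma not_forall_mem_support_iff (hg : 0 < g) {v v' : ℕ} (hvv' : v < v') (hv' : v' < 2 * g + 2) :
    ¬ ∀ j : Fin g ⊕ Fin g, (v ∈ support j ↔ v' ∈ support j) := by
  intro h
  by_cases hv : v / 2 < g
  · have h₁ := h (.inl ⟨v / 2, hv⟩)
    have h₂ := h (.inr ⟨v / 2, hv⟩)
    simp only [support, Sum.elim_inl, Sum.elim_inr, mem_range, mem_insert, mem_singleton] at h₁ h₂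
    omega
  · have h₁ := h (.inr ⟨g - 1, by omega⟩)
    simp only [support, Sum.elim_inr, mem_insert, mem_singleton] at h₁
    omega

lemma basisMatrix_injective (hg : 0 < g) : Function.Injective (basisMatrix g) := by
  intro m m' h
  have hsupp : ∀ j, ((m : ℕ) ∈ support j ↔ (m' : ℕ) ∈ support j) := fun j => by
    rw [← basisMatrix_eq_one_iff, ← basisMatrix_eq_one_iff, h]
  rcases lt_trichotomy m m' with hlt | heq | hgt
  · exact absurd hsupp (not_forall_mem_support_iff hg hlt m'.isLt)
  · exact heq
  · exact absurd (fun j => (hsupp j).symm) (not_forall_mem_support_iff hg hgt m.isLt)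

lemma card_basisMatrix_eq_one (j : Fin g ⊕ Fin g) :
    Fintype.card {m // basisMatrix g m j = 1} = (support j).card := by
  rw [Fintype.card_subtype]
  simp only [basisMatrix_eq_one_iff]
  exact Fin.card_filter_val_mem _ fun x => lt_of_mem_support

lemma eq_zero_of_card_support_eq_two (hg : 2 ≤ g) (τ : Equiv.Perm (Fin (2 * g + 2)))
    (r : Fin g ⊕ Fin g → ZMod 2) (h : ∀ m j, basisMatrix g (τ m) j = basisMatrix g m j + r j)
    {j : Fin g ⊕ Fin g} (hj : (support j).card = 2) : r j = 0 := by
  by_contra hr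
  have hr : r j = 1 := by revert hr; generalize r j = x; revert x; decide
  have := two_mul_card_eq_card_of_map_eq_add_one τ (fun m => basisMatrix g m j)
    fun m => by rw [h, hr]
  rw [card_basisMatrix_eq_one, hj, Fintype.card_fin] at this
  omega

lemma eq_one_of_forall_basisMatrix_apply (hg : 2 ≤ g) (τ : Equiv.Perm (Fin (2 * g + 2)))
    (r : Fin g ⊕ Fin g → ZMod 2) (h : ∀ m j, basisMatrix g (τ m) j = basisMatrix g m j + r j) :
    τ = 1 := by
  have hg₀ : 0 < g := by omega
  have hfix : ∀ j, (support j).card = 2 → ∀ m, ((τ m : ℕ) ∈ support j ↔ (m : ℕ) ∈ support j) :=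
    fun j hj m => by
      rw [← basisMatrix_eq_one_iff, ← basisMatrix_eq_one_iff, h,
        eq_zero_of_card_support_eq_two hg τ r h hj, add_zero]
  have hτ₀ : τ 0 = 0 := by
    have h₁ := hfix (.inl ⟨0, hg₀⟩) rfl 0
    have h₂ := hfix (.inr ⟨0, hg₀⟩) rfl 0
    simp only [support, Sum.elim_inl, Sum.elim_inr, mem_range, mem_insert, mem_singleton,
      Fin.val_zero] at h₁ h₂
    exact Fin.ext (by rw [Fin.val_zero]; omega)
  have hr : r = 0 := funext fun j => by simpa [hτ₀] using h 0 j
  exact Equiv.ext fun m =>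
    basisMatrix_injective hg₀ (funext fun j => by rw [h, hr, Pi.zero_apply, add_zero]; rfl)

lemma eq_one_of_rep_eq_one (hg : 2 ≤ g) {σ : Equiv.Perm (Fin (2 * g + 2))} (h : rep g σ = 1) :
    σ = 1 := by
  have hsub := submatrix_basisMatrix_eq σ
  rw [h, Matrix.mul_one] at hsub
  refine inv_eq_one.1 (eq_one_of_forall_basisMatrix_apply hg σ⁻¹
    (basisMatrix g (σ⁻¹ (Fin.last _))) fun m j => ?_)
  simpa [vecMulVec_apply] using congrFun₂ hsub m j

variable (g) in
def repHom : Equiv.Perm (Fin (2 * g + 2)) →* symplecticGroup (Fin g) (ZMod 2) where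
  toFun σ := ⟨rep g σ, rep_mem σ⟩
  map_one' := Subtype.ext rep_one
  map_mul' σ τ := Subtype.ext (rep_mul σ τ)

lemma repHom_injective (hg : 2 ≤ g) : Function.Injective (repHom g) :=
  (injective_iff_map_eq_one _).2 fun _ h => eq_one_of_rep_eq_one hg (congrArg Subtype.val h)

end PermToSymplectic

/-- `(2g+2)!` divides the order of the symplectic group `Sp(2g, F₂)`: the number of
connected components `|Sp(2g, F₂)|/(2g+2)!` of the moduli space of hyperelliptic curves
of genus `g` with level 2 structure is a positive integer. -/
theorem stmt10 (g : ℕ) (hg : 2 ≤ g) :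
    (2 * g + 2).factorial ∣ Nat.card (Matrix.symplecticGroup (Fin g) (ZMod 2)) := by
  have h := Subgroup.card_dvd_of_injective _ (PermToSymplectic.repHom_injective hg)
  rwa [Nat.card_perm, Nat.card_fin] at h
end
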